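/- arXiv:2509.14914 — 6 statements merged into one kernel-verified Lean document; each statement's English description precedes it below -/
import Mathlib

section
/- Let (V, 0) be a finitely generated B-scalar algebra and let H₁ and H₂ be finite pair-independent generating sets of (V, 0). Then |H₁| = |H₂|. -/
/-- A `B`-scalar algebra over a commutative semifield `B`. -/
class ScalarAlgebra (B : Type*) (V : Type*) [Semifield B] extends SMul B V, Zero V where
  mul_smul : ∀ (b b' : B) (v : V), (b * b') • v = b • (b' • v)
  one_smul : ∀ v : V, (1 : B) • v = v
  smul_zero : ∀ b : B, b • (0 : V) = 0
  zero_smul : ∀ v : V, (0 : B) • v = (0 : V)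

variable (B : Type*) {V : Type*} [Semifield B] [ScalarAlgebra B V]

/-- `u` and `v` are dependent if `u = b • v` or `v = b • u` for some scalar `b`. -/
def Dependent (u v : V) : Prop := ∃ b : B, u = b • v ∨ v = b • u

/-- `H` is pair-independent if any two distinct elements of `H` are independent. -/
def PairIndependent (H : Set V) : Prop :=
  ∀ u ∈ H, ∀ v ∈ H, u ≠ v → ¬ Dependent B u v

/-- `H` generates the `B`-scalar algebra `(V, 0)`, i.e. `B • H = V`. -/
def Generates (H : Set V) : Prop := ∀ v : V, ∃ b : B, ∃ u ∈ H, v = b • u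

/-- `(V, 0)` is cancellative: `b₁ • v = b₂ • v` with `v ≠ 0` implies `b₁ = b₂`. -/
def Cancellative : Prop :=
  ∀ (b₁ b₂ : B) (v : V), v ≠ 0 → b₁ • v = b₂ • v → b₁ = b₂

/-! Writing each element of `H₁` as a multiple of an element of `H₂` gives a map `H₁ → H₂`.
It is injective because two multiples `a • w`, `c • w` of one element are dependent (divide by
`a` when `a ≠ 0`), so `|H₁| ≤ |H₂|`, and the reverse inequality holds by symmetry. -/

theorem dependent_of_eq_smul_of_eq_smul {u v w : V} {a c : B} (hu : u = a • w) (hv : v = c • w) :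
    Dependent B u v := by
  subst hu hv
  by_cases ha : a = 0
  · exact ⟨0, Or.inl (by rw [ha, ScalarAlgebra.zero_smul, ScalarAlgebra.zero_smul])⟩
  · refine ⟨c * a⁻¹, Or.inr ?_⟩
    rw [ScalarAlgebra.mul_smul, ← ScalarAlgebra.mul_smul a⁻¹, inv_mul_cancel₀ ha,
      ScalarAlgebra.one_smul]

theorem ncard_le_ncard_of_pairIndependent_of_generates {H₁ H₂ : Set V} (h₂fin : H₂.Finite)
    (h₁pi : PairIndependent B H₁) (h₂gen : Generates B H₂) : H₁.ncard ≤ H₂.ncard := by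
  choose b w hw hbw using h₂gen
  refine Set.ncard_le_ncard_of_injOn w (fun u _ => hw u) ?_ h₂fin
  intro u₁ hu₁ u₂ hu₂ hw_eq
  by_contra hne
  have hu₂_smul : u₂ = b u₂ • w u₁ := by rw [hw_eq]; exact hbw u₂
  exact h₁pi u₁ hu₁ u₂ hu₂ hne (dependent_of_eq_smul_of_eq_smul B (hbw u₁) hu₂_smul)

/-- Any two finite pair-independent generating sets of a `B`-scalar algebra
have the same cardinality (the degree of `(V, 0)`). -/
theorem pairIndependent_generating_sets_card_eq
    (H₁ H₂ : Set V) (h₁fin : H₁.Finite) (h₂fin : H₂.Finite)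
    (h₁pi : PairIndependent B H₁) (h₁gen : Generates B H₁)
    (h₂pi : PairIndependent B H₂) (h₂gen : Generates B H₂) :
    H₁.ncard = H₂.ncard :=
  le_antisymm (ncard_le_ncard_of_pairIndependent_of_generates B h₂fin h₁pi h₂gen)
    (ncard_le_ncard_of_pairIndependent_of_generates B h₁fin h₂pi h₁gen)
end

section
/- Let (V, 0) be a finitely generated B-scalar algebra and (V', 0) a sub-B-scalar algebra of (V, 0) (i.e., V' ⊆ V is closed under scalar multiplication and contains 0). Then (V', 0) is finitely generated and deg((V', 0)) ≤ deg((V, 0)). -/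
variable (B : Type*) {V : Type*} [Semifield B] [ScalarAlgebra B V]

/-
Keep, for each `h ∈ H` whose line `B • h` meets `V'` outside `0`, one such nonzero point
of `V'`; at most `|H|` points are kept. Every nonzero `v ∈ V'` is a multiple `b • h` of some
`h ∈ H`, hence of the point kept for `h`, since nonzero scalars are invertible. Two kept points
on the lines of `h₁ ≠ h₂` are independent because a dependence between nonzero multiples of
`h₁` and `h₂` rescales to one between `h₁` and `h₂`. If no line meets `V'` outside `0`, then
`V' = {0}` and `{0}` does the job.
-/

variable {B}

instance ScalarAlgebra.toMulActionWithZero : MulActionWithZero B V where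
  mul_smul := ScalarAlgebra.mul_smul
  one_smul := ScalarAlgebra.one_smul
  smul_zero := ScalarAlgebra.smul_zero
  zero_smul := ScalarAlgebra.zero_smul

theorem Dependent.symm {u v : V} (h : Dependent B u v) : Dependent B v u :=
  let ⟨b, hb⟩ := h
  ⟨b, hb.symm⟩

theorem Dependent.of_smul_left {a : B} {u v : V} (hu : a • u ≠ 0) (h : Dependent B (a • u) v) :
    Dependent B u v := by
  obtain ⟨b, hb | hb⟩ := h
  · refine ⟨a⁻¹ * b, Or.inl ?_⟩
    rw [mul_smul, ← hb, inv_smul_smul₀ (left_ne_zero_of_smul hu)]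
  · exact ⟨b * a, Or.inr (by rw [hb, smul_smul])⟩

theorem Dependent.of_smul_smul {a c : B} {u v : V} (hu : a • u ≠ 0) (hv : c • v ≠ 0)
    (h : Dependent B (a • u) (c • v)) : Dependent B u v :=
  ((h.of_smul_left hu).symm.of_smul_left hv).symm

theorem PairIndependent.mono {H S : Set V} (hH : PairIndependent B H) (hS : S ⊆ H) :
    PairIndependent B S :=
  fun u hu v hv => hH u (hS hu) v (hS hv)

theorem PairIndependent.image_smul {H : Set V} (hH : PairIndependent B H) {g : V → B}
    (hg : ∀ h ∈ H, g h • h ≠ 0) : PairIndependent B ((fun h => g h • h) '' H) := by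
  rintro _ ⟨u, hu, rfl⟩ _ ⟨v, hv, rfl⟩ hne hdep
  exact hH u hu v hv (fun huv => hne (huv ▸ rfl)) (hdep.of_smul_smul (hg u hu) (hg v hv))

theorem pairIndependent_singleton (v : V) : PairIndependent B {v} := by
  rintro u rfl w rfl hne
  exact absurd rfl hne

theorem subalgebra_finitely_generated_deg_le_general
    (V' : Set V) (h0 : (0 : V) ∈ V')
    (H : Set V) (hfin : H.Finite) (hpi : PairIndependent B H) (hgen : Generates B H) :
    ∃ H' : Set V, H' ⊆ V' ∧ H'.Finite ∧ PairIndependent B H' ∧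
      (∀ v ∈ V', ∃ b : B, ∃ u ∈ H', v = b • u) ∧ H'.ncard ≤ H.ncard := by
  classical
  obtain ⟨-, h₀, h₀H, -⟩ := hgen 0
  set T := {h ∈ H | ∃ b : B, b • h ∈ V' ∧ b • h ≠ 0}
  have hTH : T ⊆ H := Set.sep_subset _ _
  by_cases hT : T.Nonempty
  · choose! g hg using fun h (hh : h ∈ T) => hh.2
    refine ⟨(fun h => g h • h) '' T, Set.image_subset_iff.2 fun h hh => (hg h hh).1,
      (hfin.subset hTH).image _, (hpi.mono hTH).image_smul fun h hh => (hg h hh).2, ?_,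
      (Set.ncard_image_le (hfin.subset hTH)).trans (Set.ncard_le_ncard hTH hfin)⟩
    intro v hv
    obtain ⟨b, h, hh, rfl⟩ := hgen v
    by_cases hv0 : b • h = 0
    · obtain ⟨t, ht⟩ := hT
      exact ⟨0, _, Set.mem_image_of_mem _ ht, by rw [hv0, zero_smul]⟩
    · have ht : h ∈ T := ⟨hh, b, hv, hv0⟩
      refine ⟨b * (g h)⁻¹, _, Set.mem_image_of_mem _ ht, ?_⟩
      rw [smul_smul, mul_assoc, inv_mul_cancel₀ (left_ne_zero_of_smul (hg h ht).2), mul_one]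
  · have hV'0 : ∀ v ∈ V', v = 0 := by
      intro v hv
      obtain ⟨b, h, hh, rfl⟩ := hgen v
      by_contra hv0
      exact hT ⟨h, hh, b, hv, hv0⟩
    refine ⟨{0}, Set.singleton_subset_iff.2 h0, Set.finite_singleton 0,
      pairIndependent_singleton 0, fun v hv => ⟨1, 0, rfl, by rw [hV'0 v hv, smul_zero]⟩, ?_⟩
    rw [Set.ncard_singleton]
    exact (Set.ncard_pos hfin).2 ⟨h₀, h₀H⟩

/-- A sub-`B`-scalar algebra `(V', 0)` of a finitely generated `B`-scalar algebra
`(V, 0)` is finitely generated, and its degree is at most the degree of `(V, 0)`: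
given any finite pair-independent generating set `H` of `(V, 0)`, there is a finite
pair-independent subset `H' ⊆ V'` generating `(V', 0)` with `|H'| ≤ |H|`. -/
theorem subalgebra_finitely_generated_deg_le
    (V' : Set V) (h0 : (0 : V) ∈ V') (hcl : ∀ (b : B), ∀ v ∈ V', b • v ∈ V')
    (H : Set V) (hfin : H.Finite) (hpi : PairIndependent B H) (hgen : Generates B H) :
    ∃ H' : Set V, H' ⊆ V' ∧ H'.Finite ∧ PairIndependent B H' ∧
      (∀ v ∈ V', ∃ b : B, ∃ u ∈ H', v = b • u) ∧ H'.ncard ≤ H.ncard :=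
  subalgebra_finitely_generated_deg_le_general V' h0 H hfin hpi hgen
end

section
/- Let r : T_Σ → B be a weighted tree language over a commutative semifield B. Then the m-syntactic relation ~_r, defined by b₁.ξ₁ ~_r b₂.ξ₂ iff b₁ ⊗ r(c[ξ₁]) = b₂ ⊗ r(c[ξ₂]) for every context c, is a congruence on the (Σ,B)-scalar algebra of monomials (Mon(Σ,B), 0~, top): it is an equivalence relation compatible with scalar multiplication and with all top-concatenation operations. -/
/-- Trees over a ranked alphabet `(σ, ar)`. -/
inductive RTree (σ : Type) (ar : σ → ℕ) : Type where
  | node : (s : σ) → (Fin (ar s) → RTree σ ar) → RTree σ ar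

/-- Contexts over `(σ, ar)`: trees over `σ ∪ {z}` with exactly one occurrence of the
variable `z`, represented by the path from the root to the occurrence of `z`:
`hole` is the context `z`, and `node s i ch c` is the context
`s(ξ₁,…,ξ_{i-1}, c, ξ_{i+1},…,ξ_k)` where the ground trees `ξ_j` are given by `ch`. -/
inductive RCtx (σ : Type) (ar : σ → ℕ) : Type where
  | hole : RCtx σ ar
  | node : (s : σ) → (i : Fin (ar s)) → (∀ j : Fin (ar s), j ≠ i → RTree σ ar) →
      RCtx σ ar → RCtx σ ar

variable {σ : Type} {ar : σ → ℕ}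

/-- Composition `c₁ ∘_z c₂` of contexts (substitution of `c₂` for `z` in `c₁`). -/
def RCtx.comp : RCtx σ ar → RCtx σ ar → RCtx σ ar
  | .hole, c => c
  | .node s i ch c', c => .node s i ch (c'.comp c)

/-- Substitution `c[ξ]` of the tree `ξ` for the variable `z` in the context `c`. -/
def RCtx.subst : RCtx σ ar → RTree σ ar → RTree σ ar
  | .hole, ξ => ξ
  | .node s i ch c, ξ =>
      .node s (fun j => if h : j = i then c.subst ξ else ch j h)

variable {B : Type*} [Semifield B]

/-- The m-syntactic relation `~_r` of the weighted tree language `r : T_Σ → B` on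
monomials: a monomial `b.ξ` (the map sending `ξ` to `b` and every other tree to `0`)
is represented by the pair `(b, ξ)`, and `b₁.ξ₁ ~_r b₂.ξ₂` iff
`b₁ ⊗ r(c[ξ₁]) = b₂ ⊗ r(c[ξ₂])` for every context `c`. -/
def simr (r : RTree σ ar → B) (m₁ m₂ : B × RTree σ ar) : Prop :=
  ∀ c : RCtx σ ar, m₁.1 * r (c.subst m₁.2) = m₂.1 * r (c.subst m₂.2)

/-! Replacing the arguments of `σ(ξ₁,…,ξ_k)` one at a time, each single replacement
`ξᵢ ↦ ξᵢ'` is absorbed by the context `c[σ(ξ₁,…,z,…,ξ_k)]`, and the scalars of the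
untouched arguments factor out of both sides. -/

theorem Function.reflTransGen_of_forall_update {ι α : Type*} [Fintype ι] [DecidableEq ι]
    {P : α → α → Prop} {R : (ι → α) → (ι → α) → Prop}
    (hstep : ∀ f i a, P (f i) a → R f (Function.update f i a))
    {f g : ι → α} (h : ∀ i, P (f i) (g i)) : Relation.ReflTransGen R f g := by
  suffices ∀ S : Finset ι, Relation.ReflTransGen R f (S.piecewise g f) by
    simpa using this Finset.univ
  intro S
  induction S using Finset.induction_on with
  | empty => rw [Finset.piecewise_empty]
  | insert i S hi ih =>
    rw [Finset.piecewise_insert]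
    refine ih.tail (hstep _ i _ ?_)
    rw [Finset.piecewise_eq_of_notMem _ _ _ hi]
    exact h i

lemma RCtx.comp_subst (c₁ c₂ : RCtx σ ar) (ξ : RTree σ ar) :
    (c₁.comp c₂).subst ξ = c₁.subst (c₂.subst ξ) := by
  induction c₁ with
  | hole => rfl
  | node s i ch c ih => simp [RCtx.comp, RCtx.subst, ih]

lemma RCtx.subst_node_hole (s : σ) (i : Fin (ar s)) (ts : Fin (ar s) → RTree σ ar)
    (ξ : RTree σ ar) :
    (RCtx.node s i (fun j _ => ts j) .hole).subst ξ = .node s (Function.update ts i ξ) := by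
  simp only [RCtx.subst]
  congr 1
  funext j
  rw [Function.update_apply, dite_eq_ite]

def monoTop (s : σ) (ms : Fin (ar s) → B × RTree σ ar) : B × RTree σ ar :=
  (∏ i, (ms i).1, .node s fun i => (ms i).2)

lemma prod_fst_update {ι M β : Type*} [Fintype ι] [DecidableEq ι] [CommMonoid M]
    (ms : ι → M × β) (i : ι) (m : M × β) :
    ∏ j, (Function.update ms i m j).1 = m.1 * ∏ j ∈ Finset.univ.erase i, (ms j).1 := by
  rw [← Finset.mul_prod_erase _ _ (Finset.mem_univ i), Function.update_self]
  congr 1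
  refine Finset.prod_congr rfl fun j hj => ?_
  rw [Function.update_of_ne (Finset.ne_of_mem_erase hj)]

section

variable (r : RTree σ ar → B)

theorem simr_equivalence : Equivalence (simr r) :=
  ⟨fun _ _ => rfl, fun h c => (h c).symm, fun h₁ h₂ c => (h₁ c).trans (h₂ c)⟩

theorem simr_mul_left (a : B) {m₁ m₂ : B × RTree σ ar} (h : simr r m₁ m₂) :
    simr r (a * m₁.1, m₁.2) (a * m₂.1, m₂.2) := fun c => by
  simp only [mul_assoc, h c]

theorem simr_monoTop_update (s : σ) (ms : Fin (ar s) → B × RTree σ ar) (i : Fin (ar s))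
    (m : B × RTree σ ar) (h : simr r (ms i) m) :
    simr r (monoTop s ms) (monoTop s (Function.update ms i m)) := fun c => by
  let ts j := (ms j).2
  have hc := h (c.comp (.node s i (fun j _ => ts j) .hole))
  simp only [RCtx.comp_subst, RCtx.subst_node_hole] at hc
  rw [show (ms i).2 = ts i from rfl, Function.update_eq_self] at hc
  have hsnd : (fun j => (Function.update ms i m j).2) = Function.update ts i m.2 :=
    funext (Function.apply_update (fun _ => Prod.snd) ms i m)
  calc (∏ j, (ms j).1) * r (c.subst (.node s ts))
      = (∏ j ∈ Finset.univ.erase i, (ms j).1) * ((ms i).1 * r (c.subst (.node s ts))) := by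
        rw [← Finset.mul_prod_erase _ _ (Finset.mem_univ i)]; ring
    _ = (∏ j ∈ Finset.univ.erase i, (ms j).1) *
          (m.1 * r (c.subst (.node s (Function.update ts i m.2)))) := by rw [hc]
    _ = _ := by simp only [monoTop, prod_fst_update, hsnd]; ring

end

/-- The m-syntactic relation `~_r` is a congruence on the `(Σ,B)`-scalar algebra of
monomials `(Mon(Σ,B), 0~, top)`: it is an equivalence relation, it is compatible with
scalar multiplication `a · (b.ξ) = (a ⊗ b).ξ`, and it is compatible with every
top-concatenation `top(σ)(b₁.ξ₁,…,b_k.ξ_k) = (b₁ ⊗ ⋯ ⊗ b_k).σ(ξ₁,…,ξ_k)`.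
(Monomials `b.ξ` are represented by pairs `(b, ξ)`; note that `~_r` relates
`(0, ξ)` and `(0, ζ)` for all `ξ, ζ`, so it respects the identification of all
pairs `(0, ξ)` with the zero monomial `0~`.) -/
theorem simr_is_congruence (r : RTree σ ar → B) :
    Equivalence (simr r) ∧
    (∀ (a : B) (m₁ m₂ : B × RTree σ ar), simr r m₁ m₂ →
      simr r (a * m₁.1, m₁.2) (a * m₂.1, m₂.2)) ∧
    (∀ (s : σ) (ms ms' : Fin (ar s) → B × RTree σ ar),
      (∀ i, simr r (ms i) (ms' i)) →
      simr r (∏ i, (ms i).1, .node s (fun i => (ms i).2))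
             (∏ i, (ms' i).1, .node s (fun i => (ms' i).2))) := by
  refine ⟨simr_equivalence r, fun a _ _ => simr_mul_left r a, fun s ms ms' h => ?_⟩
  have hsteps := Function.reflTransGen_of_forall_update
    (R := Function.onFun (simr r) (monoTop s)) (simr_monoTop_update r s) h
  exact Relation.reflTransGen_le_of_equivalence_of_le ((simr_equivalence r).comap _) le_rfl
    _ _ hsteps
end

section
/- Let r : T_Σ → B over a commutative semifield. Then the quotient B-scalar algebra Mon(Σ,B)/~_r is cancellative: if [b.ξ] ≠ [0~] and b₁ · [b.ξ] = b₂ · [b.ξ], then b₁ = b₂. -/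
variable {σ : Type} {ar : σ → ℕ}

variable {B : Type*} [Semifield B]

theorem simr_zero_right_iff (r : RTree σ ar → B) (b : B) (ξ : RTree σ ar) :
    simr r (b, ξ) (0, ξ) ↔ ∀ c : RCtx σ ar, b * r (c.subst ξ) = 0 := by
  simp only [simr, zero_mul]

/-- The quotient `B`-scalar algebra `Mon(Σ,B)/~_r` is cancellative: if the class of
the monomial `b.ξ` is not the zero class (i.e. `b.ξ` is not `~_r`-related to the
zero monomial, represented by `(0, ξ)`) and `b₁ · [b.ξ] = b₂ · [b.ξ]`, then
`b₁ = b₂`. -/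
theorem simr_quotient_cancellative (r : RTree σ ar → B)
    (b : B) (ξ : RTree σ ar) (b₁ b₂ : B)
    (hnz : ¬ simr r (b, ξ) (0, ξ))
    (h : simr r (b₁ * b, ξ) (b₂ * b, ξ)) :
    b₁ = b₂ := by
  obtain ⟨c, hc⟩ := not_forall.mp ((simr_zero_right_iff r b ξ).not.mp hnz)
  exact mul_right_cancel₀ hc (by simpa only [mul_assoc] using h c)
end

section
/- Let r : T_Σ → B over a commutative semifield. The congruence ~_r saturates r, and moreover ~_r is the coarsest congruence on (Mon(Σ,B), 0~, top) which saturates r: every congruence ~ saturating r is contained in ~_r. -/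
variable {σ : Type} {ar : σ → ℕ}

variable {B : Type*} [Semifield B]

/-- A relation `sim` on monomials (represented by pairs `(b, ξ)` for `b.ξ`)
saturates `r` if there is a scalar-linear form `γ` on the quotient `Mon(Σ,B)/sim`
(i.e. a map constant on `sim`-classes with `γ(b · m) = b ⊗ γ(m)`) such that
`r(ξ) = γ([1.ξ])` for all trees `ξ`. -/
def Saturates (r : RTree σ ar → B) (sim : B × RTree σ ar → B × RTree σ ar → Prop) :
    Prop :=
  ∃ γ : B × RTree σ ar → B,
    (∀ m m', sim m m' → γ m = γ m') ∧
    (∀ (b : B) (m : B × RTree σ ar), γ (b * m.1, m.2) = b * γ m) ∧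
    (∀ ξ : RTree σ ar, r ξ = γ (1, ξ))

/-!
A saturating form `γ` is determined by `r`: scalar-linearity gives `γ(b.ξ) = b ⊗ γ(1.ξ) = b ⊗ r(ξ)`.
A congruence is compatible with every context, since `c[·]` is an iterated top-concatenation
with the constant siblings `1.ξⱼ`. So if `b₁.ξ₁ ~ b₂.ξ₂` then `b₁.c[ξ₁] ~ b₂.c[ξ₂]`, and applying
`γ` gives `b₁ ⊗ r(c[ξ₁]) = b₂ ⊗ r(c[ξ₂])`. The form `b.ξ ↦ b ⊗ r(ξ)` itself is constant on
`~_r`-classes (take the trivial context), so `~_r` saturates `r`.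
-/

theorem simr_saturates (r : RTree σ ar → B) : Saturates r (simr r) :=
  ⟨fun m => m.1 * r m.2, fun _ _ h => h .hole, fun _ _ => mul_assoc _ _ _,
    fun _ => (one_mul _).symm⟩

theorem prod_node_dite_one {M : Type*} [CommMonoid M] (s : σ) (i : Fin (ar s))
    (ch : ∀ j : Fin (ar s), j ≠ i → RTree σ ar) (m : M × RTree σ ar) :
    let ms : Fin (ar s) → M × RTree σ ar := fun j => if hj : j = i then m else (1, ch j hj)
    (∏ j, (ms j).1, RTree.node s fun j => (ms j).2) =
      (m.1, RTree.node s fun j => if hj : j = i then m.2 else ch j hj) := by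
  refine Prod.ext ?_ ?_
  · simp only
    rw [Fintype.prod_eq_single i fun j hj => by simp [hj]]
    simp
  · simp only
    congr 1
    funext j
    split_ifs <;> rfl

theorem RCtx.subst_rel {M : Type*} [CommMonoid M]
    {rel : M × RTree σ ar → M × RTree σ ar → Prop} (hrefl : ∀ m, rel m m)
    (htop : ∀ (s : σ) (ms ms' : Fin (ar s) → M × RTree σ ar), (∀ i, rel (ms i) (ms' i)) →
      rel (∏ i, (ms i).1, .node s fun i => (ms i).2) (∏ i, (ms' i).1, .node s fun i => (ms' i).2))
    (c : RCtx σ ar) {m₁ m₂ : M × RTree σ ar} (h : rel m₁ m₂) :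
    rel (m₁.1, c.subst m₁.2) (m₂.1, c.subst m₂.2) := by
  induction c with
  | hole => exact h
  | node s i ch c ih =>
    have hsiblings := htop s
      (fun j => if hj : j = i then (m₁.1, c.subst m₁.2) else (1, ch j hj))
      (fun j => if hj : j = i then (m₂.1, c.subst m₂.2) else (1, ch j hj))
      fun j => by by_cases hj : j = i <;> simp [hj, ih, hrefl]
    rwa [prod_node_dite_one, prod_node_dite_one] at hsiblings

theorem Saturates.simr_of_subst {r : RTree σ ar → B}
    {rel : B × RTree σ ar → B × RTree σ ar → Prop} (hsat : Saturates r rel)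
    (hsubst : ∀ (c : RCtx σ ar) m₁ m₂, rel m₁ m₂ → rel (m₁.1, c.subst m₁.2) (m₂.1, c.subst m₂.2))
    {m₁ m₂ : B × RTree σ ar} (h : rel m₁ m₂) : simr r m₁ m₂ := by
  obtain ⟨γ, hγrel, hγsmul, hγr⟩ := hsat
  have hγ : ∀ m : B × RTree σ ar, γ m = m.1 * r m.2 := fun ⟨b, ξ⟩ => by
    simpa [hγr] using hγsmul b (1, ξ)
  intro c
  simpa only [hγ] using hγrel _ _ (hsubst c m₁ m₂ h)

/-- The m-syntactic congruence `~_r` saturates `r`, and it is the coarsest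
congruence on `(Mon(Σ,B), 0~, top)` saturating `r`: every congruence (equivalence
relation compatible with scalar multiplication and all top-concatenations) which
saturates `r` is contained in `~_r`. -/
theorem simr_saturates_and_coarsest (r : RTree σ ar → B) :
    Saturates r (simr r) ∧
    (∀ sim : B × RTree σ ar → B × RTree σ ar → Prop,
      Equivalence sim →
      (∀ (a : B) (m₁ m₂ : B × RTree σ ar), sim m₁ m₂ →
        sim (a * m₁.1, m₁.2) (a * m₂.1, m₂.2)) →
      (∀ (s : σ) (ms ms' : Fin (ar s) → B × RTree σ ar),
        (∀ i, sim (ms i) (ms' i)) →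
        sim (∏ i, (ms i).1, .node s (fun i => (ms i).2))
            (∏ i, (ms' i).1, .node s (fun i => (ms' i).2))) →
      Saturates r sim →
      ∀ m₁ m₂ : B × RTree σ ar, sim m₁ m₂ → simr r m₁ m₂) :=
  ⟨simr_saturates r, fun _ hequiv _ htop hsat _ _ =>
    hsat.simr_of_subst fun c _ _ => RCtx.subst_rel hequiv.refl htop c⟩
end

section
/- Let A = (Q, δ, F) be a bottom-up-deterministic (Σ,B)-wta over a commutative semifield. Then ker(h̃_A) ⊆ ~_{⟦A⟧}, where h̃_A : Mon(Σ,B) → B^Q_{≤1} is the scalar-linear homomorphism given by h̃_A(b.ξ) = b · h_A(ξ) and ker(h̃_A) = {(m, m') : h̃_A(m) = h̃_A(m')}. -/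
variable {σ : Type} {ar : σ → ℕ}

variable {B : Type*} [Semifield B] {Q : Type*} [Fintype Q]

/-- The operation `δ_A(σ)` of the vector algebra `V(A) = (B^Q, δ_A)` of the wta
`A = (Q, δ, F)`:
`δ_A(σ)(v₁,…,v_k)_q = ⊕_{q₁⋯q_k ∈ Q^k} (⊗_i (v_i)_{q_i}) ⊗ δ_k(q₁⋯q_k, σ, q)`. -/
def deltaA (δ : (s : σ) → (Fin (ar s) → Q) → Q → B)
    (s : σ) (vs : Fin (ar s) → Q → B) : Q → B :=
  fun q => ∑ w : Fin (ar s) → Q, (∏ i, vs i (w i)) * δ s w q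

/-- `h_A : T_Σ → B^Q`, the unique `Σ`-algebra homomorphism from the term algebra
into the vector algebra of `A`. -/
def hA (δ : (s : σ) → (Fin (ar s) → Q) → Q → B) : RTree σ ar → Q → B
  | .node s ch => deltaA δ s (fun i => hA δ (ch i))

/-- `h_A^C : C_Σ → (B^Q → B^Q)`, the unique monoid homomorphism from the free monoid
of contexts extending the elementary-context action
`g(e)(v) = δ_A(σ)(h_A(ξ₁),…,v,…,h_A(ξ_k))`. -/
def hAC (δ : (s : σ) → (Fin (ar s) → Q) → Q → B) : RCtx σ ar → (Q → B) → Q → B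
  | .hole => id
  | .node s i ch c => fun v =>
      deltaA δ s (fun j => if h : j = i then hAC δ c v else hA δ (ch j h))

/-- `A` is bottom-up-deterministic: for every `σ ∈ Σ^(k)` and `w ∈ Q^k` there is
at most one `q` with `δ_k(w, σ, q) ≠ 0`. -/
def BuDet (δ : (s : σ) → (Fin (ar s) → Q) → Q → B) : Prop :=
  ∀ (s : σ) (w : Fin (ar s) → Q) (q₁ q₂ : Q), δ s w q₁ ≠ 0 → δ s w q₂ ≠ 0 → q₁ = q₂

lemma deltaA_dite_smul (δ : (s : σ) → (Fin (ar s) → Q) → Q → B) (s : σ) (i : Fin (ar s))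
    (us : ∀ j, j ≠ i → Q → B) (b : B) (v : Q → B) :
    deltaA δ s (fun j => if h : j = i then b • v else us j h)
      = b • deltaA δ s (fun j => if h : j = i then v else us j h) := by
  funext q
  simp only [deltaA, Pi.smul_apply, smul_eq_mul, Finset.mul_sum, ← mul_assoc]
  refine Finset.sum_congr rfl fun w _ => congrArg (· * δ s w q) ?_
  rw [Fintype.prod_eq_mul_prod_compl i, Fintype.prod_eq_mul_prod_compl i]
  simp only [dite_true, Pi.smul_apply, smul_eq_mul, mul_assoc]
  congr 2
  refine Finset.prod_congr rfl fun j hj => ?_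
  rw [dif_neg (by simpa using hj), dif_neg (by simpa using hj)]

lemma hA_subst (δ : (s : σ) → (Fin (ar s) → Q) → Q → B) (c : RCtx σ ar) (ξ : RTree σ ar) :
    hA δ (c.subst ξ) = hAC δ c (hA δ ξ) := by
  induction c with
  | hole => rfl
  | node s i ch c ih =>
    simp only [RCtx.subst, hA, hAC, apply_dite (hA δ), ih]

lemma hAC_smul (δ : (s : σ) → (Fin (ar s) → Q) → Q → B) (c : RCtx σ ar) (b : B) (v : Q → B) :
    hAC δ c (b • v) = b • hAC δ c v := by
  induction c with
  | hole => rfl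
  | node s i ch c ih =>
    simp only [hAC, ih, deltaA_dite_smul]

lemma smul_semantics_subst (δ : (s : σ) → (Fin (ar s) → Q) → Q → B) (F : Q → B)
    (c : RCtx σ ar) (b : B) (ξ : RTree σ ar) :
    b * ∑ q, hA δ (c.subst ξ) q * F q = ∑ q, hAC δ c (b • hA δ ξ) q * F q := by
  simp only [hA_subst, hAC_smul, Finset.mul_sum, Pi.smul_apply, smul_eq_mul, mul_assoc]

theorem ker_htilde_subset_simr_general
    (δ : (s : σ) → (Fin (ar s) → Q) → Q → B) (F : Q → B)
    (b₁ b₂ : B) (ξ₁ ξ₂ : RTree σ ar)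
    (h : (fun q => b₁ * hA δ ξ₁ q) = fun q => b₂ * hA δ ξ₂ q) :
    simr (fun ξ => ∑ q : Q, hA δ ξ q * F q) (b₁, ξ₁) (b₂, ξ₂) := by
  intro c
  change b₁ • hA δ ξ₁ = b₂ • hA δ ξ₂ at h
  rw [smul_semantics_subst, smul_semantics_subst, h]

/-- For a bottom-up-deterministic wta `A`, `ker(h̃_A) ⊆ ~_{⟦A⟧}`, where
`h̃_A : Mon(Σ,B) → B^Q_{≤1}` is the scalar-linear homomorphism
`h̃_A(b.ξ) = b · h_A(ξ)` and `⟦A⟧(ξ) = ⊕_q h_A(ξ)_q ⊗ F_q`. -/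
theorem ker_htilde_subset_simr
    (δ : (s : σ) → (Fin (ar s) → Q) → Q → B) (F : Q → B) (hdet : BuDet δ)
    (b₁ b₂ : B) (ξ₁ ξ₂ : RTree σ ar)
    (h : (fun q => b₁ * hA δ ξ₁ q) = fun q => b₂ * hA δ ξ₂ q) :
    simr (fun ξ => ∑ q : Q, hA δ ξ q * F q) (b₁, ξ₁) (b₂, ξ₂) :=
  ker_htilde_subset_simr_general δ F b₁ b₂ ξ₁ ξ₂ h
end
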